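/- arXiv:2402.15639 — 3 statements merged into one kernel-verified Lean document; each statement's English description precedes it below -/
import Mathlib

section
/- Let f : ℝⁿ → ℝ and F : ℝⁿ → ℝᵐ be continuously differentiable, let ρ ≥ 0, β > 0, and let x, x⁺ ∈ ℝⁿ with d = x⁺ − x. Assume there exist constants L_f, M_F, L_F > 0 such that ‖∇f(x⁺) − ∇f(x)‖ ≤ L_f‖d‖, ‖J_F(x)‖ ≤ M_F, ‖J_F(x⁺)‖ ≤ M_F, ‖J_F(x⁺) − J_F(x)‖ ≤ L_F‖d‖, and ‖F(x⁺) − F(x)‖ ≤ M_F‖d‖. If the optimality condition ∇f(x) + ρ J_F(x)ᵀ(F(x) + J_F(x) d) + β d = 0 holds, then ‖∇P_ρ(x⁺)‖ ≤ (L_f + ρ(L_F‖F(x)‖ + 4M_F²) + β)·‖x⁺ − x‖. -/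
open scoped RealInnerProductSpace

/-- Bound on the gradient of the quadratic penalty function at the new
LQP iterate: under local Lipschitz/boundedness bounds and the optimality condition
`∇f(x) + ρ J_F(x)ᵀ(F(x) + J_F(x)d) + βd = 0` with `d = x⁺ − x`, one has
`‖∇P_ρ(x⁺)‖ ≤ (L_f + ρ(L_F‖F(x)‖ + 4M_F²) + β)‖x⁺ − x‖`. -/
theorem lqp_gradient_bound {n m : ℕ}
    (f : EuclideanSpace ℝ (Fin n) → ℝ)
    (F : EuclideanSpace ℝ (Fin n) → EuclideanSpace ℝ (Fin m))
    (hf : ContDiff ℝ 1 f) (hF : ContDiff ℝ 1 F)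
    (ρ β : ℝ) (hρ : 0 ≤ ρ) (hβ : 0 < β)
    (x xp : EuclideanSpace ℝ (Fin n))
    (Lf MF LF : ℝ) (hLf : 0 < Lf) (hMF : 0 < MF) (hLF : 0 < LF)
    (hgradf : ‖gradient f xp - gradient f x‖ ≤ Lf * ‖xp - x‖)
    (hJx : ‖fderiv ℝ F x‖ ≤ MF)
    (hJxp : ‖fderiv ℝ F xp‖ ≤ MF)
    (hJlip : ‖fderiv ℝ F xp - fderiv ℝ F x‖ ≤ LF * ‖xp - x‖)
    (hFlip : ‖F xp - F x‖ ≤ MF * ‖xp - x‖)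
    (hopt : gradient f x +
        ρ • (ContinuousLinearMap.adjoint (fderiv ℝ F x)) (F x + fderiv ℝ F x (xp - x)) +
        β • (xp - x) = 0) :
    ‖gradient f xp + ρ • (ContinuousLinearMap.adjoint (fderiv ℝ F xp)) (F xp)‖ ≤
      (Lf + ρ * (LF * ‖F x‖ + 4 * MF ^ 2) + β) * ‖xp - x‖ := by
  set d := xp - x with hd
  set Jx := fderiv ℝ F x
  set Jxp := fderiv ℝ F xp
  set Ax := ContinuousLinearMap.adjoint Jx
  set Axp := ContinuousLinearMap.adjoint Jxp
  have key : gradient f xp + ρ • Axp (F xp) =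
      (gradient f xp - gradient f x) + ρ • (Axp (F xp - F x))
        + ρ • ((Axp - Ax) (F x)) - ρ • (Ax (Jx d)) - β • d
        + (gradient f x + ρ • Ax (F x + Jx d) + β • d) := by
    simp only [map_add, map_sub, ContinuousLinearMap.sub_apply, smul_add, smul_sub]
    abel
  rw [key, hopt, add_zero]
  have hnd : (0:ℝ) ≤ ‖d‖ := norm_nonneg _
  have h1 : ‖ρ • (Axp (F xp - F x))‖ ≤ ρ * (MF * (MF * ‖d‖)) := by
    rw [norm_smul, Real.norm_of_nonneg hρ]
    refine mul_le_mul_of_nonneg_left ?_ hρ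
    calc ‖Axp (F xp - F x)‖ ≤ ‖Axp‖ * ‖F xp - F x‖ := Axp.le_opNorm _
      _ ≤ MF * (MF * ‖d‖) := by
          rw [show ‖Axp‖ = ‖Jxp‖ from ContinuousLinearMap.adjoint.norm_map Jxp]
          exact mul_le_mul hJxp hFlip (norm_nonneg _) hMF.le
  have h2 : ‖ρ • ((Axp - Ax) (F x))‖ ≤ ρ * (LF * ‖d‖ * ‖F x‖) := by
    rw [norm_smul, Real.norm_of_nonneg hρ]
    refine mul_le_mul_of_nonneg_left ?_ hρ
    calc ‖(Axp - Ax) (F x)‖ ≤ ‖Axp - Ax‖ * ‖F x‖ := (Axp - Ax).le_opNorm _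
      _ ≤ LF * ‖d‖ * ‖F x‖ := by
          refine mul_le_mul_of_nonneg_right ?_ (norm_nonneg _)
          have : Axp - Ax = ContinuousLinearMap.adjoint (Jxp - Jx) := by
            simp [Axp, Ax, map_sub]
          rw [this, ContinuousLinearMap.adjoint.norm_map (Jxp - Jx)]
          exact hJlip
  have h3 : ‖ρ • (Ax (Jx d))‖ ≤ ρ * (MF * (MF * ‖d‖)) := by
    rw [norm_smul, Real.norm_of_nonneg hρ]
    refine mul_le_mul_of_nonneg_left ?_ hρ
    calc ‖Ax (Jx d)‖ ≤ ‖Ax‖ * ‖Jx d‖ := Ax.le_opNorm _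
      _ ≤ MF * (MF * ‖d‖) := by
          rw [show ‖Ax‖ = ‖Jx‖ from ContinuousLinearMap.adjoint.norm_map Jx]
          exact mul_le_mul hJx ((Jx.le_opNorm d).trans
            (mul_le_mul_of_nonneg_right hJx hnd)) (norm_nonneg _) hMF.le
  have h4 : ‖β • d‖ = β * ‖d‖ := by rw [norm_smul, Real.norm_of_nonneg hβ.le]
  have tri : ‖(gradient f xp - gradient f x) + ρ • (Axp (F xp - F x))
        + ρ • ((Axp - Ax) (F x)) - ρ • (Ax (Jx d)) - β • d‖ ≤
      ‖gradient f xp - gradient f x‖ + ‖ρ • (Axp (F xp - F x))‖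
        + ‖ρ • ((Axp - Ax) (F x))‖ + ‖ρ • (Ax (Jx d))‖ + ‖β • d‖ := by
    calc _ ≤ ‖(gradient f xp - gradient f x) + ρ • (Axp (F xp - F x))
          + ρ • ((Axp - Ax) (F x)) - ρ • (Ax (Jx d))‖ + ‖β • d‖ := norm_sub_le _ _
      _ ≤ _ := by
        gcongr
        calc _ ≤ ‖(gradient f xp - gradient f x) + ρ • (Axp (F xp - F x))
              + ρ • ((Axp - Ax) (F x))‖ + ‖ρ • (Ax (Jx d))‖ := norm_sub_le _ _
          _ ≤ _ := by
            gcongr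
            exact (norm_add_le _ _).trans (by gcongr; exact norm_add_le _ _)
  have := tri.trans (by linarith : ‖gradient f xp - gradient f x‖ + ‖ρ • (Axp (F xp - F x))‖
        + ‖ρ • ((Axp - Ax) (F x))‖ + ‖ρ • (Ax (Jx d))‖ + ‖β • d‖ ≤
      Lf * ‖d‖ + ρ * (MF * (MF * ‖d‖)) + ρ * (LF * ‖d‖ * ‖F x‖) + ρ * (MF * (MF * ‖d‖)) + β * ‖d‖)
  refine this.trans ?_
  nlinarith [mul_nonneg hρ hnd, sq_nonneg MF, mul_nonneg (mul_nonneg hρ hnd) (sq_nonneg MF)]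
end

section
/- Let P : ℝⁿ → ℝ be continuously differentiable with gradient ∇P, let {x_k}_{k≥0} ⊆ ℝⁿ be bounded, let β̲ > 0, Γ > 0, and assume: (i) P(x_{k+1}) ≤ P(x_k) − (β̲/2)‖x_{k+1} − x_k‖² for all k ≥ 0; (ii) P(x_k) converges, decreasing, to P* ∈ ℝ, and set E_k = P(x_k) − P*; (iii) ‖∇P(x_k)‖ ≤ Γ‖x_k − x_{k−1}‖ for all k ≥ 1; (iv) (Kurdyka–Łojasiewicz property) there exist k₁ ≥ 1, τ > 0 and a continuous concave function φ : [0, τ) → [0, ∞) with φ(0) = 0, φ continuously differentiable on (0, τ) with φ' > 0, such that for all k ≥ k₁ with E_k > 0 one has E_k < τ and φ'(E_k)·‖∇P(x_k)‖ ≥ 1. Then ∑_{k=1}^{∞}‖x_{k+1} − x_k‖ < ∞ (the sequence has finite length), and consequently {x_k} converges to some x* ∈ ℝⁿ with ∇P(x*) = 0. -/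
/-!
Sufficient decrease bounds `‖x_{k+1} - x_k‖²` by the drop `E_k - E_{k+1}` of the Lyapunov
error, and by concavity of `φ` this drop, weighted by `φ'(E_k)`, is bounded by
`φ(E_k) - φ(E_{k+1})`. The KL inequality and the gradient bound turn `φ'(E_k)` into
`1 / (Γ ‖x_k - x_{k-1}‖)`, so that AM-GM gives
`‖x_{k+1} - x_k‖ ≤ ‖x_k - x_{k-1}‖ / 2 + (Γ / β̲) (φ(E_k) - φ(E_{k+1}))`.
Summing this recursion telescopes the `φ` terms, which gives finite length; finite length
makes `{x_k}` Cauchy, and the gradient bound forces the gradient at the limit to vanish.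
-/

open Filter Topology

lemma ConcaveOn.mul_sub_le_of_hasDerivAt {S : Set ℝ} {f : ℝ → ℝ} {x y f' : ℝ}
    (hf : ConcaveOn ℝ S f) (hx : x ∈ S) (hy : y ∈ S) (hxy : x ≤ y) (hf' : HasDerivAt f f' y) :
    f' * (y - x) ≤ f y - f x := by
  rcases hxy.eq_or_lt with rfl | hlt
  · simp
  · have h := hf.le_slope_of_hasDerivAt hx hy hlt hf'
    rw [slope_def_field] at h
    exact (le_div_iff₀ (sub_pos.2 hlt)).1 h

lemma ContDiff.continuous_gradient {E : Type*} [NormedAddCommGroup E] [InnerProductSpace ℝ E]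
    [CompleteSpace E] {f : E → ℝ} (hf : ContDiff ℝ 1 f) : Continuous (gradient f) :=
  (InnerProductSpace.toDual ℝ E).symm.continuous.comp (hf.continuous_fderiv one_ne_zero)

lemma le_half_add_of_sq_le_two_mul {a b c : ℝ} (hb : 0 ≤ b) (hc : 0 ≤ c)
    (h : a ^ 2 ≤ 2 * b * c) : a ≤ b / 2 + c := by
  have hsq : a ^ 2 ≤ (b / 2 + c) ^ 2 := by nlinarith [sq_nonneg (b / 2 - c)]
  exact (le_abs_self a).trans (abs_le_of_sq_le_sq hsq (by positivity))

/-- One step of the KL argument, for `A = ‖x_{k+1} - x_k‖`, `B = ‖x_k - x_{k-1}‖`,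
`Δ = E_k - E_{k+1}`, `g = ‖∇P(x_k)‖`, `p = φ'(E_k)` and `D = φ(E_k) - φ(E_{k+1})`. -/
lemma le_half_add_of_descent_of_KL {A B Δ D p g β Γ : ℝ} (hβ : 0 < β) (hΓ : 0 ≤ Γ)
    (hB : 0 ≤ B) (hp : 0 ≤ p) (hdesc : β / 2 * A ^ 2 ≤ Δ) (hg : g ≤ Γ * B)
    (hKL : 1 ≤ p * g) (hD : p * Δ ≤ D) :
    A ≤ B / 2 + Γ / β * D := by
  have hpA : p * (β / 2 * A ^ 2) ≤ D := (mul_le_mul_of_nonneg_left hdesc hp).trans hD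
  have hD0 : 0 ≤ D := le_trans (by positivity) hpA
  refine le_half_add_of_sq_le_two_mul hB (by positivity) ?_
  calc A ^ 2 ≤ A ^ 2 * (p * (Γ * B)) :=
        le_mul_of_one_le_right (sq_nonneg A) (hKL.trans (mul_le_mul_of_nonneg_left hg hp))
    _ = 2 * B * (Γ / β) * (p * (β / 2 * A ^ 2)) := by field_simp
    _ ≤ 2 * B * (Γ / β) * D := by gcongr
    _ = 2 * B * (Γ / β * D) := by ring

lemma summable_of_le_mul_add_sub {a ψ : ℕ → ℝ} {θ m : ℝ} (ha : ∀ k, 0 ≤ a k) (hθ₀ : 0 ≤ θ)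
    (hθ₁ : θ < 1) (hψ : ∀ k, m ≤ ψ k) (h : ∀ k, a (k + 1) ≤ θ * a k + (ψ k - ψ (k + 1))) :
    Summable a := by
  refine summable_of_sum_range_le ha (c := (a 0 + ψ 0 - m) / (1 - θ)) fun N => ?_
  have hmono : ∑ k ∈ Finset.range N, a k ≤ ∑ k ∈ Finset.range (N + 1), a k := by
    rw [Finset.sum_range_succ]; linarith [ha N]
  have hstep : ∑ k ∈ Finset.range N, a (k + 1)
      ≤ θ * ∑ k ∈ Finset.range N, a k + (ψ 0 - ψ N) := by
    rw [← Finset.sum_range_sub', Finset.mul_sum, ← Finset.sum_add_distrib]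
    exact Finset.sum_le_sum fun k _ => h k
  have hshift := Finset.sum_range_succ' a N
  have hθmono := mul_le_mul_of_nonneg_left hmono hθ₀
  rw [le_div_iff₀ (sub_pos.2 hθ₁)]
  linarith [hψ N]

section KL

variable {E a g : ℕ → ℝ} {β Γ τ : ℝ} {φ φ' : ℝ → ℝ} {k₁ : ℕ}

lemma succ_le_half_add_of_KL (hβ : 0 < β) (hΓ : 0 ≤ Γ)
    (hE : ∀ k, 0 ≤ E k) (ha : ∀ k, 0 ≤ a k)
    (hdesc : ∀ k, β / 2 * a k ^ 2 ≤ E k - E (k + 1)) (hg : ∀ k, g (k + 1) ≤ Γ * a k)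
    (hφconc : ConcaveOn ℝ (Set.Ico 0 τ) φ)
    (hφderiv : ∀ s ∈ Set.Ioo 0 τ, HasDerivAt φ (φ' s) s)
    (hφ'pos : ∀ s ∈ Set.Ioo 0 τ, 0 < φ' s)
    (hKL : ∀ k, k₁ ≤ k → 0 < E k → E k < τ ∧ 1 ≤ φ' (E k) * g k)
    {k : ℕ} (hk : k₁ ≤ k + 1) :
    a (k + 1) ≤ a k / 2 + Γ / β * (φ (E (k + 1)) - φ (E (k + 2))) := by
  have hE_succ : E (k + 2) ≤ E (k + 1) := by nlinarith [hdesc (k + 1), sq_nonneg (a (k + 1))]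
  rcases (hE (k + 1)).eq_or_lt with hzero | hpos
  · have hzero' : E (k + 2) = E (k + 1) := le_antisymm hE_succ (hzero ▸ hE (k + 2))
    have : a (k + 1) ^ 2 ≤ 0 := by nlinarith [hdesc (k + 1)]
    rw [hzero', sub_self, mul_zero, add_zero]
    nlinarith [ha k]
  · obtain ⟨hτ', hKL'⟩ := hKL (k + 1) hk hpos
    have hmem : E (k + 1) ∈ Set.Ioo 0 τ := ⟨hpos, hτ'⟩
    have hmem' : E (k + 2) ∈ Set.Ico 0 τ := ⟨hE (k + 2), hE_succ.trans_lt hτ'⟩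
    refine le_half_add_of_descent_of_KL hβ hΓ (ha k) (hφ'pos _ hmem).le (hdesc (k + 1))
      (hg k) hKL' ?_
    exact hφconc.mul_sub_le_of_hasDerivAt hmem' (Set.Ioo_subset_Ico_self hmem) hE_succ
      (hφderiv _ hmem)

lemma summable_of_KL (hβ : 0 < β) (hΓ : 0 ≤ Γ) (hτ : 0 < τ)
    (hE : ∀ k, 0 ≤ E k) (ha : ∀ k, 0 ≤ a k)
    (hdesc : ∀ k, β / 2 * a k ^ 2 ≤ E k - E (k + 1)) (hg : ∀ k, g (k + 1) ≤ Γ * a k)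
    (hφconc : ConcaveOn ℝ (Set.Ico 0 τ) φ) (hφnonneg : ∀ s ∈ Set.Ico 0 τ, 0 ≤ φ s)
    (hφderiv : ∀ s ∈ Set.Ioo 0 τ, HasDerivAt φ (φ' s) s)
    (hφ'pos : ∀ s ∈ Set.Ioo 0 τ, 0 < φ' s)
    (hKL : ∀ k, k₁ ≤ k → 0 < E k → E k < τ ∧ 1 ≤ φ' (E k) * g k) :
    Summable a := by
  have hmem : ∀ k, k₁ ≤ k → E k ∈ Set.Ico 0 τ := fun k hk => by
    rcases (hE k).eq_or_lt with hzero | hpos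
    · exact hzero ▸ ⟨le_rfl, hτ⟩
    · exact ⟨hpos.le, (hKL k hk hpos).1⟩
  refine (summable_nat_add_iff k₁).1 <| summable_of_le_mul_add_sub (θ := 1 / 2)
    (ψ := fun m => Γ / β * φ (E (m + k₁ + 1))) (m := 0) (fun m => ha (m + k₁))
    (by norm_num) (by norm_num) (fun m => by have := hφnonneg _ (hmem (m + k₁ + 1) (by omega)); positivity) fun m => ?_
  have key := succ_le_half_add_of_KL (k := m + k₁) hβ hΓ hE ha hdesc hg hφconc hφderiv hφ'pos
    hKL (by omega)
  rw [show m + 1 + k₁ = m + k₁ + 1 by omega]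
  linarith

end KL

theorem lqp_finite_length_KL_general {n : ℕ}
    (P : EuclideanSpace ℝ (Fin n) → ℝ) (hP : ContDiff ℝ 1 P)
    (x : ℕ → EuclideanSpace ℝ (Fin n))
    (βlb Γ : ℝ) (hβlb : 0 < βlb) (hΓ : 0 < Γ)
    (hdesc : ∀ k : ℕ, P (x (k + 1)) ≤ P (x k) - βlb / 2 * ‖x (k + 1) - x k‖ ^ 2)
    (Pstar : ℝ)
    (hmono : ∀ k : ℕ, P (x (k + 1)) ≤ P (x k))
    (hconv : Tendsto (fun k : ℕ => P (x k)) atTop (𝓝 Pstar))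
    (hgrad : ∀ k : ℕ, 1 ≤ k → ‖gradient P (x k)‖ ≤ Γ * ‖x k - x (k - 1)‖)
    (k₁ : ℕ) (τ : ℝ) (hτ : 0 < τ)
    (φ φ' : ℝ → ℝ)
    (hφconc : ConcaveOn ℝ (Set.Ico 0 τ) φ)
    (hφnonneg : ∀ s ∈ Set.Ico (0 : ℝ) τ, 0 ≤ φ s)
    (hφderiv : ∀ s ∈ Set.Ioo (0 : ℝ) τ, HasDerivAt φ (φ' s) s)
    (hφ'pos : ∀ s ∈ Set.Ioo (0 : ℝ) τ, 0 < φ' s)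
    (hKL : ∀ k : ℕ, k₁ ≤ k → 0 < P (x k) - Pstar →
        P (x k) - Pstar < τ ∧ 1 ≤ φ' (P (x k) - Pstar) * ‖gradient P (x k)‖) :
    Summable (fun k : ℕ => ‖x (k + 1) - x k‖) ∧
    ∃ xstar : EuclideanSpace ℝ (Fin n),
      Tendsto x atTop (𝓝 xstar) ∧ gradient P xstar = 0 := by
  have hgrad_succ : ∀ k, ‖gradient P (x (k + 1))‖ ≤ Γ * ‖x (k + 1) - x k‖ := fun k => by
    simpa using hgrad (k + 1) (by omega)
  have hE : ∀ k, 0 ≤ P (x k) - Pstar := fun k =>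
    sub_nonneg.2 ((antitone_nat_of_succ_le hmono).le_of_tendsto hconv k)
  have hsum : Summable fun k => ‖x (k + 1) - x k‖ :=
    summable_of_KL hβlb hΓ.le hτ hE (fun k => norm_nonneg _) (fun k => by linarith [hdesc k])
      hgrad_succ hφconc hφnonneg hφderiv hφ'pos hKL
  have hdist : Summable fun k => dist (x k) (x (k + 1)) := by
    simpa only [dist_eq_norm, norm_sub_rev] using hsum
  obtain ⟨xstar, hx⟩ := cauchySeq_tendsto_of_complete (cauchySeq_of_summable_dist hdist)
  have hgrad_lim : Tendsto (fun k => gradient P (x (k + 1))) atTop (𝓝 0) :=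
    squeeze_zero_norm hgrad_succ (by simpa using hsum.tendsto_atTop_zero.const_mul Γ)
  exact ⟨hsum, xstar, hx, tendsto_nhds_unique
    ((hP.continuous_gradient.tendsto xstar).comp ((tendsto_add_atTop_iff_nat 1).2 hx)) hgrad_lim⟩

/-- Finite length of the LQP iterates under the Kurdyka–Łojasiewicz
property: if `P` is `C¹`, `{x_k}` is bounded, the sufficient-decrease, convergence of
`P(x_k)` to `P*`, and gradient bound hypotheses hold, and `P` satisfies the KL property
along the iterates with desingularizing function `φ`, then `∑‖x_{k+1} − x_k‖ < ∞` and
`{x_k}` converges to a critical point of `P`. -/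
theorem lqp_finite_length_KL {n : ℕ}
    (P : EuclideanSpace ℝ (Fin n) → ℝ) (hP : ContDiff ℝ 1 P)
    (x : ℕ → EuclideanSpace ℝ (Fin n))
    (hbdd : Bornology.IsBounded (Set.range x))
    (βlb Γ : ℝ) (hβlb : 0 < βlb) (hΓ : 0 < Γ)
    (hdesc : ∀ k : ℕ, P (x (k + 1)) ≤ P (x k) - βlb / 2 * ‖x (k + 1) - x k‖ ^ 2)
    (Pstar : ℝ)
    (hmono : ∀ k : ℕ, P (x (k + 1)) ≤ P (x k))
    (hconv : Tendsto (fun k : ℕ => P (x k)) atTop (𝓝 Pstar))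
    (hgrad : ∀ k : ℕ, 1 ≤ k → ‖gradient P (x k)‖ ≤ Γ * ‖x k - x (k - 1)‖)
    (k₁ : ℕ) (hk₁ : 1 ≤ k₁) (τ : ℝ) (hτ : 0 < τ)
    (φ φ' : ℝ → ℝ)
    (hφcont : ContinuousOn φ (Set.Ico 0 τ))
    (hφconc : ConcaveOn ℝ (Set.Ico 0 τ) φ)
    (hφ0 : φ 0 = 0)
    (hφnonneg : ∀ s ∈ Set.Ico (0 : ℝ) τ, 0 ≤ φ s)
    (hφderiv : ∀ s ∈ Set.Ioo (0 : ℝ) τ, HasDerivAt φ (φ' s) s)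
    (hφ'pos : ∀ s ∈ Set.Ioo (0 : ℝ) τ, 0 < φ' s)
    (hKL : ∀ k : ℕ, k₁ ≤ k → 0 < P (x k) - Pstar →
        P (x k) - Pstar < τ ∧ 1 ≤ φ' (P (x k) - Pstar) * ‖gradient P (x k)‖) :
    Summable (fun k : ℕ => ‖x (k + 1) - x k‖) ∧
    ∃ xstar : EuclideanSpace ℝ (Fin n),
      Tendsto x atTop (𝓝 xstar) ∧ gradient P xstar = 0 :=
  lqp_finite_length_KL_general P hP x βlb Γ hβlb hΓ hdesc Pstar hmono hconv hgrad k₁ τ hτ φ φ'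
    hφconc hφnonneg hφderiv hφ'pos hKL
end

section
/- Let P : ℝⁿ → ℝ be continuously differentiable with gradient ∇P, let {x_k}_{k≥0} ⊆ ℝⁿ, β̲ > 0, Γ > 0, and assume: (i) P(x_{k+1}) ≤ P(x_k) − (β̲/2)‖x_{k+1} − x_k‖² for all k ≥ 0; (ii) P(x_k) decreases to P* ∈ ℝ and E_k = P(x_k) − P* > 0 for all k; (iii) ‖∇P(x_k)‖ ≤ Γ‖x_k − x_{k−1}‖ for all k ≥ 1; (iv) x_k → x*; (v) there exist k₁ ≥ 1, τ > 0 and a continuous concave φ : [0, τ) → [0, ∞) with φ(0) = 0, continuously differentiable on (0, τ) with φ' > 0, such that for all k ≥ k₁: E_k < τ and φ'(E_k)·‖∇P(x_k)‖ ≥ 1. Then there exists C > 0 such that for all k ≥ k₁: ‖x_k − x*‖ ≤ C·max{φ(E_k), √(E_{k−1})}; in fact, for any θ > Γ, setting δ₀ = 1 − Γ/θ, one may take C = θ/(β̲ δ₀) + (Γ/(θ δ₀))·√(2/β̲). -/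
open Filter Topology

/-!
Write `E_k = P(x_k) - P*` and `d_k = ‖x_{k+1} - x_k‖`. Concavity of `φ` gives
`φ'(E_k) (E_k - E_{k+1}) ≤ φ(E_k) - φ(E_{k+1})`; combined with sufficient decrease, the
relative-error bound and the KL inequality this yields
`d_k² ≤ (2Γ/β̲) (φ(E_k) - φ(E_{k+1})) d_{k-1}`, and AM-GM with weight `θ` turns it into
`d_k ≤ (Γ/θ) d_{k-1} + (θ/2β̲) (φ(E_k) - φ(E_{k+1}))`. Summing from `k`, the `φ`-terms telescope
and the `d`-terms are absorbed since `Γ/θ < 1`, so the tail length `∑_{j ≥ k} d_j ≥ ‖x_k - x*‖`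
is at most `((Γ/θ) d_{k-1} + (θ/2β̲) φ(E_k)) / δ₀`. Finally `d_{k-1} ≤ √(2/β̲) √E_{k-1}`,
again by sufficient decrease.
-/

theorem ConcaveOn.mul_sub_le_sub_of_hasDerivAt {S : Set ℝ} {f : ℝ → ℝ} {f' x y : ℝ}
    (hf : ConcaveOn ℝ S f) (hx : x ∈ S) (hy : y ∈ S) (hxy : x ≤ y) (hf' : HasDerivAt f f' y) :
    f' * (y - x) ≤ f y - f x := by
  rcases hxy.eq_or_lt with rfl | hlt
  · simp
  · have := hf.le_slope_of_hasDerivAt hx hy hlt hf'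
    rwa [slope_def_field, le_div_iff₀ (sub_pos.2 hlt)] at this

theorem le_add_of_sq_le_four_mul {a u v : ℝ} (hu : 0 ≤ u) (hv : 0 ≤ v) (h : a ^ 2 ≤ 4 * u * v) :
    a ≤ u + v :=
  le_of_pow_le_pow_left₀ two_ne_zero (add_nonneg hu hv) (h.trans (four_mul_le_sq_add u v))

theorem le_add_of_sufficient_decrease_of_kl {β Γ θ a b p D Δ : ℝ} (hβ : 0 < β) (hθ : 0 < θ)
    (hp : 0 ≤ p) (hdecr : β / 2 * a ^ 2 ≤ D) (hKL : 1 ≤ p * (Γ * b)) (hΔ : p * D ≤ Δ) :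
    a ≤ Γ / θ * b + θ / (2 * β) * Δ := by
  have hD : 0 ≤ D := (by positivity : 0 ≤ β / 2 * a ^ 2).trans hdecr
  have hΓb : 0 ≤ Γ * b := (pos_of_mul_pos_right (zero_lt_one.trans_le hKL) hp).le
  have hΔ0 : 0 ≤ Δ := (mul_nonneg hp hD).trans hΔ
  have hsq : β / 2 * a ^ 2 ≤ Δ * (Γ * b) :=
    calc β / 2 * a ^ 2 ≤ D := hdecr
      _ ≤ D * (p * (Γ * b)) := le_mul_of_one_le_right hD hKL
      _ = p * D * (Γ * b) := by ring
      _ ≤ Δ * (Γ * b) := by gcongr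
  refine le_add_of_sq_le_four_mul (by rw [div_mul_eq_mul_div]; positivity) (by positivity) ?_
  calc a ^ 2 = 2 / β * (β / 2 * a ^ 2) := by field_simp
    _ ≤ 2 / β * (Δ * (Γ * b)) := by gcongr
    _ = 4 * (Γ / θ * b) * (θ / (2 * β) * Δ) := by field_simp; ring

theorem sum_range_le_of_le_mul_add_sub {a ψ : ℕ → ℝ} {r : ℝ} (hr0 : 0 ≤ r) (hr1 : r < 1)
    (ha : ∀ j, 0 ≤ a j) (hψ : ∀ j, 0 ≤ ψ j)
    (h : ∀ j, a (j + 1) ≤ r * a j + (ψ j - ψ (j + 1))) (N : ℕ) :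
    ∑ j ∈ Finset.range N, a (j + 1) ≤ (r * a 0 + ψ 0) / (1 - r) := by
  have hrec : ∑ j ∈ Finset.range N, a (j + 1) ≤ r * ∑ j ∈ Finset.range N, a j + (ψ 0 - ψ N) :=
    calc ∑ j ∈ Finset.range N, a (j + 1)
        ≤ ∑ j ∈ Finset.range N, (r * a j + (ψ j - ψ (j + 1))) := Finset.sum_le_sum fun j _ => h j
      _ = _ := by rw [Finset.sum_add_distrib, ← Finset.mul_sum, Finset.sum_range_sub']
  have hshift : ∑ j ∈ Finset.range N, a j ≤ a 0 + ∑ j ∈ Finset.range N, a (j + 1) := by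
    linarith [Finset.sum_range_succ a N, Finset.sum_range_succ' a N, ha N]
  rw [le_div_iff₀ (sub_pos.2 hr1)]
  nlinarith [hψ N, mul_le_mul_of_nonneg_left hshift hr0]

theorem dist_le_of_le_mul_add_sub {X : Type*} [PseudoMetricSpace X] {x : ℕ → X} {x₀ : X}
    {ψ : ℕ → ℝ} {r : ℝ} (hx : Tendsto x atTop (𝓝 x₀)) (hr0 : 0 ≤ r) (hr1 : r < 1)
    (hψ : ∀ j, 0 ≤ ψ j)
    (h : ∀ j, dist (x (j + 1)) (x (j + 1 + 1)) ≤ r * dist (x j) (x (j + 1)) + (ψ j - ψ (j + 1))) :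
    dist (x 1) x₀ ≤ (r * dist (x 0) (x 1) + ψ 0) / (1 - r) := by
  have hsum := sum_range_le_of_le_mul_add_sub (a := fun j => dist (x j) (x (j + 1))) hr0 hr1
    (fun _ => dist_nonneg) hψ h
  calc dist (x 1) x₀ ≤ ∑' j, dist (x (j + 1)) (x (j + 1 + 1)) :=
        dist_le_tsum_of_dist_le_of_tendsto₀ _ (fun _ => le_rfl)
          (summable_of_sum_range_le (fun _ => dist_nonneg) hsum) (hx.comp (tendsto_add_atTop_nat 1))
    _ ≤ _ := Real.tsum_le_of_sum_range_le (fun _ => dist_nonneg) hsum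

theorem ConcaveOn.le_add_sub_of_sufficient_decrease_of_kl {φ φ' : ℝ → ℝ} {τ β Γ θ e e' a b g : ℝ}
    (hφconc : ConcaveOn ℝ (Set.Ico 0 τ) φ)
    (hφderiv : ∀ s ∈ Set.Ioo (0 : ℝ) τ, HasDerivAt φ (φ' s) s)
    (hφ'pos : ∀ s ∈ Set.Ioo (0 : ℝ) τ, 0 < φ' s) (hβ : 0 < β) (hθ : 0 < θ)
    (he : e ∈ Set.Ioo 0 τ) (he' : 0 ≤ e') (hdecr : β / 2 * a ^ 2 ≤ e - e')
    (hg : g ≤ Γ * b) (hKL : 1 ≤ φ' e * g) :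
    a ≤ Γ / θ * b + θ / (2 * β) * (φ e - φ e') := by
  have hp : 0 ≤ φ' e := (hφ'pos e he).le
  have hee' : e' ≤ e := by nlinarith [sq_nonneg a]
  exact le_add_of_sufficient_decrease_of_kl hβ hθ hp hdecr
    (hKL.trans (mul_le_mul_of_nonneg_left hg hp))
    (hφconc.mul_sub_le_sub_of_hasDerivAt ⟨he', hee'.trans_lt he.2⟩ (Set.Ioo_subset_Ico_self he)
      hee' (hφderiv e he))

theorem dist_le_of_sufficient_decrease_of_kl {X : Type*} [PseudoMetricSpace X] {x : ℕ → X}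
    {x₀ : X} {E g : ℕ → ℝ} {φ φ' : ℝ → ℝ} {τ β Γ θ : ℝ} {k₁ : ℕ}
    (hx : Tendsto x atTop (𝓝 x₀)) (hβ : 0 < β) (hΓ : 0 ≤ Γ) (hθ : Γ < θ)
    (hφconc : ConcaveOn ℝ (Set.Ico 0 τ) φ)
    (hφnonneg : ∀ s ∈ Set.Ico (0 : ℝ) τ, 0 ≤ φ s)
    (hφderiv : ∀ s ∈ Set.Ioo (0 : ℝ) τ, HasDerivAt φ (φ' s) s)
    (hφ'pos : ∀ s ∈ Set.Ioo (0 : ℝ) τ, 0 < φ' s)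
    (hdecr : ∀ j, β / 2 * dist (x j) (x (j + 1)) ^ 2 ≤ E j - E (j + 1))
    (hE : ∀ j, k₁ ≤ j → E j ∈ Set.Ioo 0 τ)
    (hg : ∀ j, k₁ ≤ j + 1 → g (j + 1) ≤ Γ * dist (x j) (x (j + 1)))
    (hKL : ∀ j, k₁ ≤ j → 1 ≤ φ' (E j) * g j) (m : ℕ) (hm : k₁ ≤ m + 1) :
    dist (x (m + 1)) x₀ ≤
      (Γ / θ * dist (x m) (x (m + 1)) + θ / (2 * β) * φ (E (m + 1))) / (1 - Γ / θ) := by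
  have hθ0 : 0 < θ := hΓ.trans_lt hθ
  have hE' : ∀ j, E (m + (j + 1)) ∈ Set.Ioo 0 τ := fun j => hE _ (by omega)
  have hψ : ∀ j, 0 ≤ θ / (2 * β) * φ (E (m + (j + 1))) := fun j =>
    mul_nonneg (by positivity) (hφnonneg _ (Set.Ioo_subset_Ico_self (hE' j)))
  have hstep := fun j => hφconc.le_add_sub_of_sufficient_decrease_of_kl hφderiv hφ'pos hβ hθ0
    (hE' j) (hE' (j + 1)).1.le (hdecr (m + (j + 1))) (hg (m + j) (by omega)) (hKL _ (by omega))
  simpa only [add_zero] using dist_le_of_le_mul_add_sub (x := fun j => x (m + j))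
    (hx.comp (tendsto_atTop_mono (Nat.le_add_left · m) tendsto_id)) (div_nonneg hΓ hθ0.le)
    ((div_lt_one hθ0).2 hθ) hψ fun j => (hstep j).trans_eq (by rw [mul_sub]; rfl)

theorem le_sqrt_mul_sqrt_of_sufficient_decrease {β a e e' : ℝ} (hβ : 0 < β) (he' : 0 ≤ e')
    (hdecr : β / 2 * a ^ 2 ≤ e - e') : a ≤ √(2 / β) * √e := by
  rw [← Real.sqrt_mul (by positivity)]
  refine Real.le_sqrt_of_sq_le ?_
  calc a ^ 2 = 2 / β * (β / 2 * a ^ 2) := by field_simp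
    _ ≤ 2 / β * e := by gcongr; linarith

theorem lqp_distance_estimate_KL_general {n : ℕ}
    (P : EuclideanSpace ℝ (Fin n) → ℝ)
    (x : ℕ → EuclideanSpace ℝ (Fin n))
    (βlb Γ : ℝ) (hβlb : 0 < βlb) (hΓ : 0 < Γ)
    (hdesc : ∀ k : ℕ, P (x (k + 1)) ≤ P (x k) - βlb / 2 * ‖x (k + 1) - x k‖ ^ 2)
    (Pstar : ℝ)
    (hpos : ∀ k : ℕ, 0 < P (x k) - Pstar)
    (hgrad : ∀ k : ℕ, 1 ≤ k → ‖gradient P (x k)‖ ≤ Γ * ‖x k - x (k - 1)‖)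
    (xstar : EuclideanSpace ℝ (Fin n)) (hlim : Tendsto x atTop (𝓝 xstar))
    (k₁ : ℕ) (hk₁ : 1 ≤ k₁) (τ : ℝ)
    (φ φ' : ℝ → ℝ)
    (hφconc : ConcaveOn ℝ (Set.Ico 0 τ) φ)
    (hφnonneg : ∀ s ∈ Set.Ico (0 : ℝ) τ, 0 ≤ φ s)
    (hφderiv : ∀ s ∈ Set.Ioo (0 : ℝ) τ, HasDerivAt φ (φ' s) s)
    (hφ'pos : ∀ s ∈ Set.Ioo (0 : ℝ) τ, 0 < φ' s)
    (hKL : ∀ k : ℕ, k₁ ≤ k →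
        P (x k) - Pstar < τ ∧ 1 ≤ φ' (P (x k) - Pstar) * ‖gradient P (x k)‖) :
    (∃ C : ℝ, 0 < C ∧ ∀ k : ℕ, k₁ ≤ k →
        ‖x k - xstar‖ ≤
          C * max (φ (P (x k) - Pstar)) (Real.sqrt (P (x (k - 1)) - Pstar))) ∧
    (∀ θ : ℝ, Γ < θ → ∀ k : ℕ, k₁ ≤ k →
        ‖x k - xstar‖ ≤
          (θ / (βlb * (1 - Γ / θ)) + Γ / (θ * (1 - Γ / θ)) * Real.sqrt (2 / βlb)) *
            max (φ (P (x k) - Pstar)) (Real.sqrt (P (x (k - 1)) - Pstar))) := by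
  have hdecr (j : ℕ) : βlb / 2 * dist (x j) (x (j + 1)) ^ 2 ≤
      (P (x j) - Pstar) - (P (x (j + 1)) - Pstar) := by
    rw [dist_comm, dist_eq_norm]; linarith [hdesc j]
  have bound (θ : ℝ) (hθ : Γ < θ) (k : ℕ) (hk : k₁ ≤ k) : ‖x k - xstar‖ ≤
      (θ / (βlb * (1 - Γ / θ)) + Γ / (θ * (1 - Γ / θ)) * √(2 / βlb)) *
        max (φ (P (x k) - Pstar)) (√(P (x (k - 1)) - Pstar)) := by
    obtain ⟨m, rfl⟩ : ∃ m, k = m + 1 := ⟨k - 1, by omega⟩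
    have hθ0 : 0 < θ := hΓ.trans hθ
    have hδ : 0 < 1 - Γ / θ := sub_pos.2 ((div_lt_one hθ0).2 hθ)
    have htail := dist_le_of_sufficient_decrease_of_kl (g := fun j => ‖gradient P (x j)‖) hlim
      hβlb hΓ.le hθ hφconc hφnonneg hφderiv hφ'pos hdecr (fun j hj => ⟨hpos j, (hKL j hj).1⟩)
      (fun j hj => by
        simpa only [dist_eq_norm', Nat.add_sub_cancel] using hgrad (j + 1) (by omega))
      (fun j hj => (hKL j hj).2) m hk
    have hstep := le_sqrt_mul_sqrt_of_sufficient_decrease hβlb (hpos (m + 1)).le (hdecr m)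
    rw [Nat.add_sub_cancel, ← dist_eq_norm]
    set M := max (φ (P (x (m + 1)) - Pstar)) (√(P (x m) - Pstar))
    have hM : 0 ≤ M := (Real.sqrt_nonneg _).trans (le_max_right _ _)
    calc dist (x (m + 1)) xstar
        ≤ (Γ / θ * (√(2 / βlb) * M) + θ / (2 * βlb) * M) / (1 - Γ / θ) := by
          refine htail.trans (div_le_div_of_nonneg_right ?_ hδ.le)
          gcongr
          · exact hstep.trans (by gcongr; exact le_max_right _ _)
          · exact le_max_left _ _
      _ = (θ / (2 * βlb * (1 - Γ / θ)) + Γ / (θ * (1 - Γ / θ)) * √(2 / βlb)) * M := by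
          field_simp
          ring
      _ ≤ _ := by gcongr; linarith
  refine ⟨⟨_, ?_, bound (2 * Γ) (by linarith)⟩, bound⟩
  rw [div_mul_cancel_right₀ hΓ.ne']
  positivity

/-- Distance estimate to the limit point under the KL property: with
`E_k = P(x_k) − P*`, there exists `C > 0` such that `‖x_k − x*‖ ≤ C·max{φ(E_k), √E_{k−1}}`
for all `k ≥ k₁`; in fact, for any `θ > Γ` and `δ₀ = 1 − Γ/θ`, one may take
`C = θ/(β̲δ₀) + (Γ/(θδ₀))√(2/β̲)`. -/
theorem lqp_distance_estimate_KL {n : ℕ}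
    (P : EuclideanSpace ℝ (Fin n) → ℝ) (hP : ContDiff ℝ 1 P)
    (x : ℕ → EuclideanSpace ℝ (Fin n))
    (βlb Γ : ℝ) (hβlb : 0 < βlb) (hΓ : 0 < Γ)
    (hdesc : ∀ k : ℕ, P (x (k + 1)) ≤ P (x k) - βlb / 2 * ‖x (k + 1) - x k‖ ^ 2)
    (Pstar : ℝ)
    (hmono : ∀ k : ℕ, P (x (k + 1)) ≤ P (x k))
    (hconv : Tendsto (fun k : ℕ => P (x k)) atTop (𝓝 Pstar))
    (hpos : ∀ k : ℕ, 0 < P (x k) - Pstar)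
    (hgrad : ∀ k : ℕ, 1 ≤ k → ‖gradient P (x k)‖ ≤ Γ * ‖x k - x (k - 1)‖)
    (xstar : EuclideanSpace ℝ (Fin n)) (hlim : Tendsto x atTop (𝓝 xstar))
    (k₁ : ℕ) (hk₁ : 1 ≤ k₁) (τ : ℝ) (hτ : 0 < τ)
    (φ φ' : ℝ → ℝ)
    (hφcont : ContinuousOn φ (Set.Ico 0 τ))
    (hφconc : ConcaveOn ℝ (Set.Ico 0 τ) φ)
    (hφ0 : φ 0 = 0)
    (hφnonneg : ∀ s ∈ Set.Ico (0 : ℝ) τ, 0 ≤ φ s)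
    (hφderiv : ∀ s ∈ Set.Ioo (0 : ℝ) τ, HasDerivAt φ (φ' s) s)
    (hφ'pos : ∀ s ∈ Set.Ioo (0 : ℝ) τ, 0 < φ' s)
    (hKL : ∀ k : ℕ, k₁ ≤ k →
        P (x k) - Pstar < τ ∧ 1 ≤ φ' (P (x k) - Pstar) * ‖gradient P (x k)‖) :
    (∃ C : ℝ, 0 < C ∧ ∀ k : ℕ, k₁ ≤ k →
        ‖x k - xstar‖ ≤
          C * max (φ (P (x k) - Pstar)) (Real.sqrt (P (x (k - 1)) - Pstar))) ∧
    (∀ θ : ℝ, Γ < θ → ∀ k : ℕ, k₁ ≤ k →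
        ‖x k - xstar‖ ≤
          (θ / (βlb * (1 - Γ / θ)) + Γ / (θ * (1 - Γ / θ)) * Real.sqrt (2 / βlb)) *
            max (φ (P (x k) - Pstar)) (Real.sqrt (P (x (k - 1)) - Pstar))) :=
  lqp_distance_estimate_KL_general P x βlb Γ hβlb hΓ hdesc Pstar hpos hgrad xstar hlim k₁ hk₁ τ φ φ'
    hφconc hφnonneg hφderiv hφ'pos hKL
end
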